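/- arXiv:1203.2785 — 4 statements merged into one kernel-verified Lean document; each statement's English description precedes it below -/
import Mathlib

section
/- Let S be an order in a simple Artinian ring Q and let M be a right ideal of S that is maximal with respect to being right divisorial. Then M is a completely prime right ideal of S. -/
/-! Basic notions for orders in a simple Artinian ring, following Halimi,
"Right Mori orders". Throughout, `Q` is a ring and `S` a subring of `Q`. -/

section Preamble

variable {Q : Type*} [Ring Q]

/-- `a` is a regular element of the subring `S` of `Q`, i.e. `a ∈ S` and `a` is
neither a left nor a right zero divisor in `S`. -/
def IsRegularElemIn (S : Subring Q) (a : Q) : Prop :=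
  a ∈ S ∧ (∀ b ∈ S, a * b = 0 → b = 0) ∧ (∀ b ∈ S, b * a = 0 → b = 0)

/-- `S` is an order in `Q`: every regular element of `S` is a unit of `Q` and every
element of `Q` is both a left fraction and a right fraction over `S`. -/
def IsOrderIn (S : Subring Q) : Prop :=
  (∀ a : Q, IsRegularElemIn S a → IsUnit a) ∧
  (∀ q : Q, ∃ a b : Q, a ∈ S ∧ IsRegularElemIn S b ∧ b * q = a) ∧
  (∀ q : Q, ∃ a b : Q, a ∈ S ∧ IsRegularElemIn S b ∧ q * b = a)

/-- A subset of `Q` that is a right `S`-submodule of `Q`. -/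
def IsRightModSet (S : Subring Q) (I : Set Q) : Prop :=
  (0 : Q) ∈ I ∧ (∀ x ∈ I, ∀ y ∈ I, x + y ∈ I) ∧ (∀ x ∈ I, -x ∈ I) ∧
    ∀ x ∈ I, ∀ s ∈ S, x * s ∈ I

/-- A subset of `Q` that is a left `S`-submodule of `Q`. -/
def IsLeftModSet (S : Subring Q) (I : Set Q) : Prop :=
  (0 : Q) ∈ I ∧ (∀ x ∈ I, ∀ y ∈ I, x + y ∈ I) ∧ (∀ x ∈ I, -x ∈ I) ∧
    ∀ x ∈ I, ∀ s ∈ S, s * x ∈ I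

/-- A (integral) right ideal of `S`, viewed as a subset of `Q`. -/
def IsRightIdealSet (S : Subring Q) (I : Set Q) : Prop :=
  IsRightModSet S I ∧ I ⊆ (S : Set Q)

/-- A (integral) left ideal of `S`, viewed as a subset of `Q`. -/
def IsLeftIdealSet (S : Subring Q) (I : Set Q) : Prop :=
  IsLeftModSet S I ∧ I ⊆ (S : Set Q)

/-- `(A : B)_r = {q ∈ Q : B q ⊆ A}`. -/
def colonR (A B : Set Q) : Set Q := {q : Q | ∀ b ∈ B, b * q ∈ A}

/-- `(A : B)_l = {q ∈ Q : q B ⊆ A}`. -/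
def colonL (A B : Set Q) : Set Q := {q : Q | ∀ b ∈ B, q * b ∈ A}

/-- `I^ν = (S : (S : I)_l)_r`. -/
def nuR (S : Subring Q) (I : Set Q) : Set Q := colonR (S : Set Q) (colonL (S : Set Q) I)

/-- `^ν I = (S : (S : I)_r)_l`. -/
def nuL (S : Subring Q) (I : Set Q) : Set Q := colonL (S : Set Q) (colonR (S : Set Q) I)

/-- A (fractional) right `S`-ideal: a right `S`-submodule of `Q` containing a regular
element of `S` and with `uI ⊆ S` for some unit `u` of `Q`. -/
def IsRightSIdeal (S : Subring Q) (I : Set Q) : Prop :=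
  IsRightModSet S I ∧ (∃ a ∈ I, IsRegularElemIn S a) ∧
    ∃ u : Qˣ, ∀ x ∈ I, (u : Q) * x ∈ S

/-- A (fractional) left `S`-ideal. -/
def IsLeftSIdeal (S : Subring Q) (I : Set Q) : Prop :=
  IsLeftModSet S I ∧ (∃ a ∈ I, IsRegularElemIn S a) ∧
    ∃ u : Qˣ, ∀ x ∈ I, x * (u : Q) ∈ S

/-- A completely prime right ideal of `S`: a proper right ideal `P` such that for all
`a, b ∈ S`, `aP ⊆ P` and `ab ∈ P` imply `a ∈ P` or `b ∈ P`. -/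
def IsCompletelyPrimeRightIdeal (S : Subring Q) (P : Set Q) : Prop :=
  IsRightIdealSet S P ∧ P ≠ (S : Set Q) ∧
    ∀ a ∈ S, ∀ b ∈ S, (∀ p ∈ P, a * p ∈ P) → a * b ∈ P → a ∈ P ∨ b ∈ P

/-- The right `S`-submodule of `Q` generated by a set `G`. -/
def rightSpan (S : Subring Q) (G : Set Q) : Set Q :=
  ⋂₀ {J : Set Q | IsRightModSet S J ∧ G ⊆ J}

/-- The left `S`-submodule of `Q` generated by a set `G`. -/
def leftSpan (S : Subring Q) (G : Set Q) : Set Q :=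
  ⋂₀ {J : Set Q | IsLeftModSet S J ∧ G ⊆ J}

/-- `I` is a finitely generated right `S`-submodule of `Q`. -/
def IsFGRightModSet (S : Subring Q) (I : Set Q) : Prop :=
  ∃ G : Finset Q, I = rightSpan S ↑G

/-- The ascending chain condition on regular integral right divisorial ideals of `S`. -/
def ACCRightDivisorial (S : Subring Q) : Prop :=
  ∀ f : ℕ → Set Q,
    (∀ n, IsRightIdealSet S (f n) ∧ (∃ a ∈ f n, IsRegularElemIn S a) ∧ nuR S (f n) = f n) →
    (∀ n, f n ⊆ f (n + 1)) → ∃ N, ∀ n, N ≤ n → f n = f N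

/-- The ascending chain condition on regular integral left divisorial ideals of `S`. -/
def ACCLeftDivisorial (S : Subring Q) : Prop :=
  ∀ f : ℕ → Set Q,
    (∀ n, IsLeftIdealSet S (f n) ∧ (∃ a ∈ f n, IsRegularElemIn S a) ∧ nuL S (f n) = f n) →
    (∀ n, f n ⊆ f (n + 1)) → ∃ N, ∀ n, N ≤ n → f n = f N

/-- A right Mori order: an order satisfying the ACC on regular integral right
divisorial ideals. -/
def IsRightMori (S : Subring Q) : Prop := IsOrderIn S ∧ ACCRightDivisorial S

/-- The principal right ideal `aS` of `S`, as a subset of `Q`. -/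
def principalRight (S : Subring Q) (a : Q) : Set Q := {x : Q | ∃ s ∈ S, x = a * s}

/-- The principal left ideal `Sa` of `S`, as a subset of `Q`. -/
def principalLeft (S : Subring Q) (a : Q) : Set Q := {x : Q | ∃ s ∈ S, x = s * a}

/-- A two-sided (integral) ideal of `S`, as a subset of `Q`. -/
def IsTwoSidedIdealSet (S : Subring Q) (I : Set Q) : Prop :=
  IsRightModSet S I ∧ IsLeftModSet S I ∧ I ⊆ (S : Set Q)

/-- A maximal (proper) right ideal of `S`. -/
def IsMaxRightIdeal (S : Subring Q) (M : Set Q) : Prop :=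
  IsRightIdealSet S M ∧ M ≠ (S : Set Q) ∧
    ∀ N, IsRightIdealSet S N → N ≠ (S : Set Q) → M ⊆ N → N = M

/-- A maximal (proper) left ideal of `S`. -/
def IsMaxLeftIdeal (S : Subring Q) (M : Set Q) : Prop :=
  IsLeftIdealSet S M ∧ M ≠ (S : Set Q) ∧
    ∀ N, IsLeftIdealSet S N → N ≠ (S : Set Q) → M ⊆ N → N = M

/-- `S` is local with (Jacobson radical) `M`: `M` is a two-sided ideal which is the
only maximal right ideal and the only maximal left ideal of `S`. -/
def IsLocalWithMax (S : Subring Q) (M : Set Q) : Prop :=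
  IsTwoSidedIdealSet S M ∧
    IsMaxRightIdeal S M ∧ (∀ N, IsMaxRightIdeal S N → N = M) ∧
    IsMaxLeftIdeal S M ∧ (∀ N, IsMaxLeftIdeal S N → N = M)

/-- A local order. -/
def IsLocalOrder (S : Subring Q) : Prop := IsOrderIn S ∧ ∃ M : Set Q, IsLocalWithMax S M

/-- The additive span of the set of products `a * b` with `a ∈ A`, `b ∈ B`. -/
def mulSpan (A B : Set Q) : Set Q :=
  (AddSubgroup.closure {x : Q | ∃ a ∈ A, ∃ b ∈ B, x = a * b} : AddSubgroup Q)

/-- Powers `M^n` of an ideal `M` of `S` (with `M^0 = S`). -/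
def idealPow (S : Subring Q) (M : Set Q) : ℕ → Set Q
  | 0 => (S : Set Q)
  | n + 1 => mulSpan M (idealPow S M n)

/-- A right `τ`-ideal of `S`: a right ideal `J` such that `F^ν ⊆ J` for every finitely
generated right ideal `F ⊆ J`. -/
def IsRightTauIdeal (S : Subring Q) (J : Set Q) : Prop :=
  IsRightIdealSet S J ∧
    ∀ F : Set Q, IsRightIdealSet S F → IsFGRightModSet S F → F ⊆ J → nuR S F ⊆ J

/-- A maximal (proper) right `τ`-ideal of `S`. -/
def IsMaxRightTauIdeal (S : Subring Q) (M : Set Q) : Prop :=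
  IsRightTauIdeal S M ∧ M ≠ (S : Set Q) ∧
    ∀ N, IsRightTauIdeal S N → N ≠ (S : Set Q) → M ⊆ N → N = M

/-- A prime (two-sided) ideal of the order `S`. -/
def IsPrimeIdealSet (S : Subring Q) (P : Set Q) : Prop :=
  IsTwoSidedIdealSet S P ∧ P ≠ (S : Set Q) ∧
    ∀ a ∈ S, ∀ b ∈ S, (∀ s ∈ S, a * s * b ∈ P) → a ∈ P ∨ b ∈ P

/-- A divisorial two-sided (integral) ideal of `S`: `I = I^ν = ^ν I`. -/
def IsDivisorialIdealSet (S : Subring Q) (I : Set Q) : Prop :=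
  IsTwoSidedIdealSet S I ∧ nuR S I = I ∧ nuL S I = I

/-- `D_m(S)`: the set of maximal divisorial (two-sided, integral) ideals of `S`. -/
def maxDivisorialIdeals (S : Subring Q) : Set (Set Q) :=
  {P | IsDivisorialIdealSet S P ∧ P ≠ (S : Set Q) ∧
    ∀ J, IsDivisorialIdealSet S J → J ≠ (S : Set Q) → P ⊆ J → J = P}

/-- `c` is regular modulo the ideal `P` of `S`. -/
def IsRegularModP (S : Subring Q) (P : Set Q) (c : Q) : Prop :=
  c ∈ S ∧ (∀ b ∈ S, c * b ∈ P → b ∈ P) ∧ (∀ b ∈ S, b * c ∈ P → b ∈ P)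

/-- The left order `O_l(M) = {q ∈ Q : qM ⊆ M}` of `M`. -/
def leftOrderOf (M : Set Q) : Set Q := {q : Q | ∀ m ∈ M, q * m ∈ M}

/-- `s` is a unit of the subring `R` of `Q`. -/
def IsUnitIn (R : Subring Q) (s : Q) : Prop :=
  s ∈ R ∧ ∃ t ∈ R, s * t = 1 ∧ t * s = 1

/-- A family of overrings `S = ⋂ᵢ Sᵢ` is of finite character if every nonzero
non-unit of `S` is a non-unit of only finitely many `Sᵢ`. -/
def FiniteCharacter {α : Type*} (S : Subring Q) (F : α → Subring Q) : Prop :=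
  ∀ s ∈ S, s ≠ 0 → ¬IsUnitIn S s → {i : α | ¬IsUnitIn (F i) s}.Finite

/-- `S` is right pseudo-coherent: any (nonempty) finite intersection of principal
right ideals of `S` is a finitely generated right ideal. -/
def RightPseudoCoherent (S : Subring Q) : Prop :=
  ∀ F : Finset Q, ↑F ⊆ (S : Set Q) → F.Nonempty →
    IsFGRightModSet S (⋂ a ∈ F, principalRight S a)

/-- `A :_r x = {s ∈ S : x s ∈ A}`. -/
def colonByElemR (S : Subring Q) (A : Set Q) (x : Q) : Set Q :=
  {s : Q | s ∈ S ∧ x * s ∈ A}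

/-- A `ν`-irreducible right ideal: a right divisorial right ideal which is not the
intersection of two right divisorial right ideals properly containing it. -/
def IsNuIrreducible (S : Subring Q) (I : Set Q) : Prop :=
  IsRightIdealSet S I ∧ nuR S I = I ∧
    ¬∃ A B : Set Q, (IsRightIdealSet S A ∧ nuR S A = A) ∧
      (IsRightIdealSet S B ∧ nuR S B = B) ∧ I ⊂ A ∧ I ⊂ B ∧ I = A ∩ B

/-- A non-commutative (rank one) discrete valuation ring inside `Q`. -/
def IsNCDVR (R : Subring Q) : Prop :=
  IsOrderIn R ∧ ∃ M : Set Q, IsLocalWithMax R M ∧ M ≠ ({0} : Set Q) ∧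
    (∃ p : Q, IsRegularElemIn R p ∧ M = principalRight R p ∧ M = principalLeft R p) ∧
    (⋂ n : ℕ, idealPow R M n) = ({0} : Set Q)

/-- A Krull order in the sense of Marubayashi. -/
def IsKrullOrder (S : Subring Q) : Prop :=
  ∃ (A : Set (Subring Q)) (B : Finset (Subring Q)),
    (∀ R ∈ A, (S : Set Q) ⊆ ↑R ∧ IsNCDVR R) ∧
    (∀ T ∈ B, (S : Set Q) ⊆ ↑T ∧ IsSimpleRing T ∧ IsNoetherianRing T) ∧
    ((S : Set Q) = (⋂ R ∈ A, (R : Set Q)) ∩ ⋂ T ∈ B, (T : Set Q)) ∧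
    ∀ c : Q, IsRegularElemIn S c →
      {R ∈ A | principalRight R c ≠ (R : Set Q)}.Finite ∧
      {R ∈ A | principalLeft R c ≠ (R : Set Q)}.Finite

end Preamble

/-! If `aM ⊆ M`, the right ideal `M :_r a = {s ∈ S : as ∈ M}` contains `M`, and it is right
divisorial because `M` is. By maximality it is `M` (so `ab ∈ M` forces `b ∈ M`) or all of `S`
(so `a = a · 1 ∈ M`). -/

section ColonByElem

variable {Q : Type*} [Ring Q] {S : Subring Q} {M : Set Q}

theorem subset_nuR (I : Set Q) : I ⊆ nuR S I :=
  fun x hx _ ht => ht x hx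

theorem nuR_subset_subring {I : Set Q} (hI : I ⊆ S) : nuR S I ⊆ S := by
  intro q hq
  simpa using hq 1 fun s hs => by simpa using hI hs

theorem isRightIdealSet_colonByElemR (hM : IsRightModSet S M) (a : Q) :
    IsRightIdealSet S (colonByElemR S M a) := by
  obtain ⟨hzero, hadd, hneg, hmul⟩ := hM
  refine ⟨⟨⟨S.zero_mem, by simpa using hzero⟩, ?_, ?_, ?_⟩, fun x hx => hx.1⟩
  · rintro x ⟨hxS, hxM⟩ y ⟨hyS, hyM⟩
    exact ⟨S.add_mem hxS hyS, by rw [mul_add]; exact hadd _ hxM _ hyM⟩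
  · rintro x ⟨hxS, hxM⟩
    exact ⟨S.neg_mem hxS, by rw [mul_neg]; exact hneg _ hxM⟩
  · rintro x ⟨hxS, hxM⟩ s hs
    exact ⟨S.mul_mem hxS hs, by rw [← mul_assoc]; exact hmul _ hxM s hs⟩

theorem nuR_colonByElemR_subset (M : Set Q) (a : Q) :
    nuR S (colonByElemR S M a) ⊆ colonByElemR S (nuR S M) a := by
  intro q hq
  refine ⟨nuR_subset_subring (fun x hx => hx.1) hq, fun t ht => ?_⟩
  rw [← mul_assoc]
  exact hq (t * a) fun s hs => by rw [mul_assoc]; exact ht _ hs.2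

theorem nuR_colonByElemR_of_nuR_eq (hM : nuR S M = M) (a : Q) :
    nuR S (colonByElemR S M a) = colonByElemR S M a :=
  ((nuR_colonByElemR_subset M a).trans (by rw [hM])).antisymm (subset_nuR _)

end ColonByElem

theorem rightDivisorialMaximal_isCompletelyPrime_general
    {Q : Type*} [Ring Q]
    (S : Subring Q) (M : Set Q)
    (hM : IsRightIdealSet S M) (hdiv : nuR S M = M) (hproper : M ≠ (S : Set Q))
    (hmax : ∀ N : Set Q, IsRightIdealSet S N → nuR S N = N → M ⊆ N →
      N = M ∨ N = (S : Set Q)) :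
    IsCompletelyPrimeRightIdeal S M := by
  refine ⟨hM, hproper, fun a _ b hb haM hab => ?_⟩
  have hMsub : M ⊆ colonByElemR S M a := fun m hm => ⟨hM.2 hm, haM m hm⟩
  rcases hmax _ (isRightIdealSet_colonByElemR hM.1 a) (nuR_colonByElemR_of_nuR_eq hdiv a)
    hMsub with h | h
  · have hbN : b ∈ colonByElemR S M a := ⟨hb, hab⟩
    exact Or.inr (h ▸ hbN)
  · have h1 : (1 : Q) ∈ colonByElemR S M a := h ▸ S.one_mem
    exact Or.inl (by simpa using h1.2)

/-- Proposition 2.1. Let `S` be an order in a simple Artinian ring `Q`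
and `M` a right ideal of `S` maximal with respect to being right divisorial.
Then `M` is a completely prime right ideal of `S`. -/
theorem rightDivisorialMaximal_isCompletelyPrime
    {Q : Type*} [Ring Q] [IsSimpleRing Q] [IsArtinianRing Q]
    (S : Subring Q) (hS : IsOrderIn S) (M : Set Q)
    (hM : IsRightIdealSet S M) (hdiv : nuR S M = M) (hproper : M ≠ (S : Set Q))
    (hmax : ∀ N : Set Q, IsRightIdealSet S N → nuR S N = N → M ⊆ N →
      N = M ∨ N = (S : Set Q)) :
    IsCompletelyPrimeRightIdeal S M :=
  rightDivisorialMaximal_isCompletelyPrime_general S M hM hdiv hproper hmax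
end

section
/- Let T ⊂ S be local orders in a simple Artinian ring Q with the same prime ideals. Then T is a right Mori order if and only if S is a right Mori order. -/
/-! Having the same prime ideals, the local orders `T ⊂ S` share their maximal ideal `M`.
Every right divisorial ideal of `T` is `uT` for a unit `u` of `Q`, or right divisorial over
`S`, or `uM` with `M^ν = S` over `S`; every right divisorial ideal of `S` is `uS` or right
divisorial over `T`. Taking `I^ν` over the other order turns a chain of one order into a chain
of the other, and once the image chain is stationary the original chain takes at most one
value of each kind. For `uM` this holds because units of `S` fix `M`; for comparable
principal ideals `uT ⊆ vT` (resp. `uS ⊆ vS`), `v⁻¹u` lies in `T` (resp. `S`) and has its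
inverse in `S` (resp. in the `T`-closure `S^ν`), so it avoids `M` and is a unit of `T`
(resp. `S`; this is where `S ⊄ T` enters). -/

open scoped Pointwise

section Orders

variable {Q : Type*} [Ring Q]

/-- The members of the chains in `ACCRightDivisorial`. -/
def IsRegularRightDivisorialIdeal (S : Subring Q) (I : Set Q) : Prop :=
  IsRightIdealSet S I ∧ (∃ a ∈ I, IsRegularElemIn S a) ∧ nuR S I = I

theorem subsingleton_image_of_forall_le_imp_eq {α β : Type*} [LinearOrder α] {f : α → β}
    {s : Set α} (h : ∀ m ∈ s, ∀ n ∈ s, m ≤ n → f m = f n) : (f '' s).Subsingleton := by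
  rintro _ ⟨m, hm, rfl⟩ _ ⟨n, hn, rfl⟩
  rcases le_total m n with hmn | hnm
  exacts [h m hm n hn hmn, (h n hn m hm hnm).symm]

theorem Monotone.exists_forall_ge_eq_of_finite_image {α : Type*} [PartialOrder α] {f : ℕ → α}
    (hf : Monotone f) {N : ℕ} (hfin : (f '' Set.Ici N).Finite) :
    ∃ N', ∀ n, N' ≤ n → f n = f N' := by
  obtain ⟨_, ⟨n₀, hn₀, rfl⟩, hmax⟩ := hfin.exists_maximal ⟨f N, N, Set.self_mem_Ici, rfl⟩
  exact ⟨n₀, fun n hn => (hmax ⟨n, le_trans hn₀ hn, rfl⟩ (hf hn)).antisymm (hf hn)⟩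

theorem isRegularElemIn_of_isUnit {R : Subring Q} {a : Q} (ha : a ∈ R) (hu : IsUnit a) :
    IsRegularElemIn R a :=
  ⟨ha, fun _ _ h => hu.mul_right_eq_zero.mp h, fun _ _ h => hu.mul_left_eq_zero.mp h⟩

section Divisorial

variable {R : Subring Q} {A : Set Q}

theorem subset_nuR_s11 (R : Subring Q) (A : Set Q) : A ⊆ nuR R A :=
  fun a ha _ hl => hl a ha

theorem nuR_mono (R : Subring Q) {A B : Set Q} (h : A ⊆ B) : nuR R A ⊆ nuR R B :=
  fun _ hq l hl => hq l fun a ha => hl a (h ha)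

theorem nuR_nuR (R : Subring Q) (A : Set Q) : nuR R (nuR R A) = nuR R A :=
  subset_antisymm (fun _ hq l hl => hq l fun _ hb => hb l hl) (subset_nuR_s11 R _)

theorem isRightModSet_nuR (R : Subring Q) (A : Set Q) : IsRightModSet R (nuR R A) := by
  refine ⟨fun b _ => ?_, fun x hx y hy b hb => ?_, fun x hx b hb => ?_,
    fun x hx s hs b hb => ?_⟩
  · simp
  · simpa [mul_add] using R.add_mem (hx b hb) (hy b hb)
  · simpa using R.neg_mem (hx b hb)
  · simpa [← mul_assoc] using R.mul_mem (hx b hb) hs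

theorem nuR_subset (hA : A ⊆ R) : nuR R A ⊆ R :=
  fun q hq => by simpa using hq 1 fun a ha => by simpa using hA ha

theorem nuR_eq_of_one_mem (h1 : (1 : Q) ∈ A) (hA : A ⊆ R) : nuR R A = R :=
  (nuR_subset hA).antisymm fun r hr l hl => R.mul_mem (by simpa using hl 1 h1) hr

theorem nuR_smul (R : Subring Q) (u : Qˣ) (A : Set Q) : nuR R (u • A) = u • nuR R A := by
  ext q
  rw [Set.mem_smul_set_iff_inv_smul_mem, Units.smul_def]
  constructor
  · intro hq l hl
    simpa [Units.smul_def, mul_assoc] using hq (l * ↑u⁻¹) fun _ ⟨a, ha, hb⟩ => by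
      simpa [← hb, Units.smul_def, mul_assoc] using hl a ha
  · intro hq l hl
    simpa [Units.smul_def, mul_assoc] using hq (l * u) fun a ha => by
      simpa [Units.smul_def, mul_assoc] using hl _ (Set.smul_mem_smul_set ha : u • a ∈ u • A)

theorem isRegularRightDivisorialIdeal_nuR {I : Set Q} (hIR : I ⊆ R) {a : Q} (haI : a ∈ I)
    (ha : IsUnit a) : IsRegularRightDivisorialIdeal R (nuR R I) :=
  ⟨⟨isRightModSet_nuR R I, nuR_subset hIR⟩,
    ⟨a, subset_nuR_s11 R I haI, isRegularElemIn_of_isUnit (hIR haI) ha⟩, nuR_nuR R I⟩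

end Divisorial

theorem IsRightIdealSet.eq_coe_of_one_mem {R : Subring Q} {N : Set Q}
    (hN : IsRightIdealSet R N) (h1 : (1 : Q) ∈ N) : N = R :=
  hN.2.antisymm fun r hr => by simpa using hN.1.2.2.2 1 h1 r hr

theorem isRightIdealSet_principalRight {R : Subring Q} {x : Q} (hx : x ∈ R) :
    IsRightIdealSet R (principalRight R x) := by
  refine ⟨⟨⟨0, R.zero_mem, (mul_zero x).symm⟩, ?_, ?_, ?_⟩, ?_⟩
  · rintro _ ⟨a, ha, rfl⟩ _ ⟨b, hb, rfl⟩
    exact ⟨a + b, R.add_mem ha hb, (mul_add x a b).symm⟩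
  · rintro _ ⟨a, ha, rfl⟩
    exact ⟨-a, R.neg_mem ha, (mul_neg x a).symm⟩
  · rintro _ ⟨a, ha, rfl⟩ s hs
    exact ⟨a * s, R.mul_mem ha hs, mul_assoc x a s⟩
  · rintro _ ⟨a, ha, rfl⟩
    exact R.mul_mem hx ha

theorem isRightModSet_sUnion {R : Subring Q} {c : Set (Set Q)}
    (hc : ∀ J ∈ c, IsRightModSet R J) (hchain : IsChain (· ⊆ ·) c) (hne : c.Nonempty) :
    IsRightModSet R (⋃₀ c) := by
  obtain ⟨J₀, hJ₀⟩ := hne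
  refine ⟨⟨J₀, hJ₀, (hc J₀ hJ₀).1⟩, ?_, ?_, ?_⟩
  · rintro x ⟨J₁, hJ₁, hx⟩ y ⟨J₂, hJ₂, hy⟩
    rcases hchain.total hJ₁ hJ₂ with h | h
    · exact ⟨J₂, hJ₂, (hc J₂ hJ₂).2.1 x (h hx) y hy⟩
    · exact ⟨J₁, hJ₁, (hc J₁ hJ₁).2.1 x hx y (h hy)⟩
  · rintro x ⟨J, hJ, hx⟩
    exact ⟨J, hJ, (hc J hJ).2.2.1 x hx⟩
  · rintro x ⟨J, hJ, hx⟩ s hs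
    exact ⟨J, hJ, (hc J hJ).2.2.2 x hx s hs⟩

namespace IsLocalWithMax

variable {R : Subring Q} {M : Set Q}

theorem subset_coe (h : IsLocalWithMax R M) : M ⊆ R := h.1.2.2

theorem mul_mem_left (h : IsLocalWithMax R M) {r x : Q} (hr : r ∈ R) (hx : x ∈ M) :
    r * x ∈ M :=
  h.1.2.1.2.2.2 x hx r hr

theorem mul_mem_right (h : IsLocalWithMax R M) {x r : Q} (hx : x ∈ M) (hr : r ∈ R) :
    x * r ∈ M :=
  h.1.1.2.2.2 x hx r hr

theorem one_not_mem (h : IsLocalWithMax R M) : (1 : Q) ∉ M :=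
  fun h1 => h.2.1.2.1 (IsRightIdealSet.eq_coe_of_one_mem ⟨h.1.1, h.subset_coe⟩ h1)

/-- Zorn's lemma puts `N` inside a maximal right ideal, and `M` is the only one. -/
theorem subset_of_one_not_mem (h : IsLocalWithMax R M) {N : Set Q}
    (hN : IsRightIdealSet R N) (h1 : (1 : Q) ∉ N) : N ⊆ M := by
  let C : Set (Set Q) := {J | IsRightIdealSet R J ∧ (1 : Q) ∉ J}
  have hC : ∀ c ⊆ C, IsChain (· ⊆ ·) c → c.Nonempty → ∃ ub ∈ C, ∀ J ∈ c, J ⊆ ub := by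
    intro c hcC hchain hne
    refine ⟨⋃₀ c, ⟨⟨isRightModSet_sUnion (fun J hJ => (hcC hJ).1.1) hchain hne, ?_⟩, ?_⟩,
      fun J hJ => Set.subset_sUnion_of_mem hJ⟩
    · rintro x ⟨J, hJ, hx⟩
      exact (hcC hJ).1.2 hx
    · rintro ⟨J, hJ, hx⟩
      exact (hcC hJ).2 hx
  obtain ⟨m, hNm, hm⟩ := zorn_subset_nonempty C hC N ⟨hN, h1⟩
  have hmax : IsMaxRightIdeal R m := by
    refine ⟨hm.prop.1, fun hmR => hm.prop.2 (by rw [hmR]; exact R.one_mem), ?_⟩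
    intro N' hN' hN'R hmN'
    exact (hm.2 ⟨hN', fun h1' => hN'R (hN'.eq_coe_of_one_mem h1')⟩ hmN').antisymm hmN'
  exact h.2.2.1 m hmax ▸ hNm

theorem subset_of_ne (h : IsLocalWithMax R M) {N : Set Q} (hN : IsRightIdealSet R N)
    (hNR : N ≠ R) : N ⊆ M :=
  h.subset_of_one_not_mem hN fun h1 => hNR (hN.eq_coe_of_one_mem h1)

theorem exists_mul_eq_one (h : IsLocalWithMax R M) {x : Q} (hx : x ∈ R) (hxM : x ∉ M) :
    ∃ y ∈ R, x * y = 1 := by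
  by_contra! hno
  refine hxM (h.subset_of_one_not_mem (isRightIdealSet_principalRight hx) ?_
    ⟨1, R.one_mem, (mul_one x).symm⟩)
  rintro ⟨y, hy, h1⟩
  exact hno y hy h1.symm

theorem inv_mem_of_not_mem (h : IsLocalWithMax R M) {u : Qˣ} (hu : (u : Q) ∈ R)
    (huM : (u : Q) ∉ M) : ((u⁻¹ : Qˣ) : Q) ∈ R := by
  obtain ⟨y, hy, huy⟩ := h.exists_mul_eq_one hu huM
  rwa [Units.inv_eq_of_mul_eq_one_right huy]

theorem isPrimeIdealSet (h : IsLocalWithMax R M) : IsPrimeIdealSet R M := by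
  refine ⟨h.1, h.2.1.2.1, fun a ha b _ hab => or_iff_not_imp_left.2 fun haM => ?_⟩
  obtain ⟨y, hy, hay⟩ := h.exists_mul_eq_one ha haM
  simpa [hay] using hab y hy

theorem eq_of_isPrimeIdealSet_iff {T S : Subring Q} {MT MS : Set Q}
    (hT : IsLocalWithMax T MT) (hS : IsLocalWithMax S MS)
    (hprimes : ∀ P, IsPrimeIdealSet T P ↔ IsPrimeIdealSet S P) : MT = MS := by
  have hMT := (hprimes MT).1 hT.isPrimeIdealSet
  have hMS := (hprimes MS).2 hS.isPrimeIdealSet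
  exact (hS.subset_of_ne ⟨hMT.1.1, hMT.1.2.2⟩ hMT.2.1).antisymm
    (hT.subset_of_ne ⟨hMS.1.1, hMS.1.2.2⟩ hMS.2.1)

/-- The generator is `i * y` with `l * i * y = 1`, a unit of `Q` by Dedekind-finiteness. -/
theorem exists_eq_unit_smul [IsDedekindFiniteMonoid Q] (h : IsLocalWithMax R M) {I : Set Q}
    (hI : IsRightModSet R I) {l i : Q} (hl : l ∈ colonL (R : Set Q) I) (hi : i ∈ I)
    (hliM : l * i ∉ M) : ∃ u : Qˣ, I = u • (R : Set Q) := by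
  obtain ⟨y, hy, hliy⟩ := h.exists_mul_eq_one (hl i hi) hliM
  have hl1 : l * (i * y) = 1 := by rw [← mul_assoc, hliy]
  refine ⟨⟨i * y, l, mul_eq_one_symm hl1, hl1⟩, Set.ext fun x => ?_⟩
  rw [Set.mem_smul_set_iff_inv_smul_mem, Units.smul_def]
  refine ⟨fun hx => hl x hx, fun hx => ?_⟩
  have hx' : i * y * (l * x) ∈ I := hI.2.2.2 _ (hI.2.2.2 i hi y hy) _ hx
  rwa [← mul_assoc, mul_eq_one_symm hl1, one_mul] at hx'

end IsLocalWithMax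

theorem inv_mul_mem_of_unit_smul_subset {A : Set Q} (h1 : (1 : Q) ∈ A) {u v : Qˣ}
    (h : u • A ⊆ v • A) : ((v⁻¹ * u : Qˣ) : Q) ∈ A := by
  have hu := h (Set.smul_mem_smul_set h1 : u • (1 : Q) ∈ u • A)
  rwa [Set.mem_smul_set_iff_inv_smul_mem, smul_smul, Units.smul_def, smul_eq_mul,
    mul_one] at hu

theorem unit_smul_subset_of_mul_mem {A : Set Q} {u v : Qˣ}
    (h : ∀ a ∈ A, ((v⁻¹ * u : Qˣ) : Q) * a ∈ A) : u • A ⊆ v • A := by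
  refine Set.smul_set_subset_iff.2 fun a ha => ?_
  rw [Set.mem_smul_set_iff_inv_smul_mem, smul_smul, Units.smul_def]
  exact h a ha

section Overring

variable {T S : Subring Q} {M : Set Q}

theorem unit_smul_eq_of_subset_of_smul_overring_eq (hT : IsLocalWithMax T M)
    (hS : IsLocalWithMax S M) {u v : Qˣ} (hle : u • (T : Set Q) ⊆ v • (T : Set Q))
    (heq : u • (S : Set Q) = v • (S : Set Q)) : u • (T : Set Q) = v • (T : Set Q) := by
  have hxT := inv_mul_mem_of_unit_smul_subset T.one_mem hle
  have hxS := inv_mul_mem_of_unit_smul_subset S.one_mem heq.ge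
  have hxM : ((v⁻¹ * u : Qˣ) : Q) ∉ M := fun hxM =>
    hT.one_not_mem (by simpa [mul_assoc] using hS.mul_mem_left hxS hxM)
  refine hle.antisymm (unit_smul_subset_of_mul_mem fun t ht => T.mul_mem ?_ ht)
  simpa using hT.inv_mem_of_not_mem hxT hxM

theorem unit_smul_max_eq (hS : IsLocalWithMax S M) {u v : Qˣ}
    (heq : u • (S : Set Q) = v • (S : Set Q)) : u • M = v • M :=
  (unit_smul_subset_of_mul_mem fun _ hm =>
      hS.mul_mem_left (inv_mul_mem_of_unit_smul_subset S.one_mem heq.le) hm).antisymm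
    (unit_smul_subset_of_mul_mem fun _ hm =>
      hS.mul_mem_left (inv_mul_mem_of_unit_smul_subset S.one_mem heq.ge) hm)

theorem unit_smul_eq_of_subset_of_smul_nuR_eq (hS : IsLocalWithMax S M) (hMT : M ⊆ T)
    (hST : ¬(S : Set Q) ⊆ T) {u v : Qˣ} (hle : u • (S : Set Q) ⊆ v • (S : Set Q))
    (heq : u • nuR T S = v • nuR T S) : u • (S : Set Q) = v • (S : Set Q) := by
  have hxS := inv_mul_mem_of_unit_smul_subset S.one_mem hle
  have hxinv := inv_mul_mem_of_unit_smul_subset (subset_nuR_s11 T S S.one_mem) heq.ge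
  have hxM : ((v⁻¹ * u : Qˣ) : Q) ∉ M := by
    intro hxM
    refine hST fun s hs => ?_
    have hl : s * ((v⁻¹ * u : Qˣ) : Q) ∈ colonL (T : Set Q) (S : Set Q) := fun s' hs' =>
      hMT (hS.mul_mem_right (hS.mul_mem_left hs hxM) hs')
    simpa [mul_assoc] using hxinv _ hl
  refine hle.antisymm (unit_smul_subset_of_mul_mem fun s hs => S.mul_mem ?_ hs)
  simpa using hS.inv_mem_of_not_mem hxS hxM

end Overring

section Classification

variable [IsDedekindFiniteMonoid Q] {T S : Subring Q} {M : Set Q}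

theorem exists_eq_unit_smul_max (hS : IsLocalWithMax S M) (hMT : M ⊆ T)
    (hTS : (T : Set Q) ⊆ S) {I : Set Q} (hν : nuR T I = I)
    (hA : ∀ l ∈ colonL (T : Set Q) I, ∀ i ∈ I, l * i ∈ M) {q : Q} (hq : q ∈ nuR S I)
    (hqI : q ∉ I) : ∃ u : Qˣ, (u : Q) = q ∧ I = u • M := by
  have hcolon : ∀ l ∈ colonL (T : Set Q) I, l ∈ colonL (S : Set Q) I :=
    fun l hl i hi => hTS (hl i hi)
  obtain ⟨l, hl, hlq⟩ : ∃ l ∈ colonL (T : Set Q) I, l * q ∉ T := by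
    by_contra! h
    exact hqI (hν.subset h)
  obtain ⟨w, hw, hlqw⟩ := hS.exists_mul_eq_one (hq l (hcolon l hl)) fun h => hlq (hMT h)
  have hwlq : w * l * q = 1 := by rw [mul_assoc]; exact mul_eq_one_symm hlqw
  refine ⟨⟨q, w * l, mul_eq_one_symm hwlq, hwlq⟩, rfl, Set.ext fun x => ?_⟩
  rw [Set.mem_smul_set_iff_inv_smul_mem, Units.smul_def, smul_eq_mul]
  refine ⟨fun hx => ?_, fun hx => hν.subset fun l' hl' => ?_⟩
  · show w * l * x ∈ M
    rw [mul_assoc]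
    exact hS.mul_mem_left hw (hA l hl x hx)
  · have hx' : l' * q * (w * l * x) ∈ M := hS.mul_mem_left (hq l' (hcolon l' hl')) hx
    rw [mul_assoc, ← mul_assoc q, mul_eq_one_symm hwlq, one_mul] at hx'
    exact hMT hx'

theorem rightDivisorial_trichotomy (hT : IsLocalWithMax T M) (hS : IsLocalWithMax S M)
    (hTS : (T : Set Q) ⊆ S) {I : Set Q} (hI : IsRightModSet T I) (hν : nuR T I = I) :
    (∃ u : Qˣ, I = u • (T : Set Q)) ∨ nuR S I = I ∨
      ∃ u : Qˣ, I = u • M ∧ nuR S M = S := by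
  by_cases hA : ∃ l ∈ colonL (T : Set Q) I, ∃ i ∈ I, l * i ∉ M
  · obtain ⟨l, hl, i, hi, hli⟩ := hA
    exact .inl (hT.exists_eq_unit_smul hI hl hi hli)
  push Not at hA
  by_cases hνS : nuR S I ⊆ I
  · exact .inr (.inl (hνS.antisymm (subset_nuR_s11 S I)))
  obtain ⟨q, hq, hqI⟩ := Set.not_subset.mp hνS
  obtain ⟨u, rfl, rfl⟩ := exists_eq_unit_smul_max hS hT.subset_coe hTS hν hA hq hqI
  refine .inr (.inr ⟨u, rfl, ?_⟩)
  by_contra hne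
  have hsub : nuR S M ⊆ M :=
    hS.subset_of_ne ⟨isRightModSet_nuR S M, nuR_subset hS.subset_coe⟩ hne
  rw [nuR_smul] at hq
  exact hqI (Set.smul_set_mono hsub hq)

theorem rightDivisorial_dichotomy (hS : IsLocalWithMax S M) (hMT : M ⊆ T)
    (hTS : (T : Set Q) ⊆ S) {I : Set Q} (hI : IsRightModSet S I) (hν : nuR S I = I) :
    (∃ u : Qˣ, I = u • (S : Set Q)) ∨ nuR T I = I := by
  by_cases hA : ∃ l ∈ colonL (S : Set Q) I, ∃ i ∈ I, l * i ∉ M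
  · obtain ⟨l, hl, i, hi, hli⟩ := hA
    exact .inl (hS.exists_eq_unit_smul hI hl hi hli)
  push Not at hA
  exact .inr (subset_antisymm (fun q hq => hν.subset fun l hl =>
    hTS (hq l fun i hi => hMT (hA l hl i hi))) (subset_nuR_s11 T I))

end Classification

section Mori

variable [IsDedekindFiniteMonoid Q] {T S : Subring Q} {M : Set Q}

theorem ACCRightDivisorial.of_overring (hTo : IsOrderIn T) (hT : IsLocalWithMax T M)
    (hS : IsLocalWithMax S M) (hTS : (T : Set Q) ⊆ S) (hacc : ACCRightDivisorial S) :
    ACCRightDivisorial T := by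
  intro f hf hchain
  obtain ⟨N, hN⟩ := hacc (fun n => nuR S (f n))
    (fun n => have ⟨a, haI, ha⟩ := (hf n).2.1
      isRegularRightDivisorialIdeal_nuR ((hf n).1.2.trans hTS) haI (hTo.1 a ha))
    (fun n => nuR_mono S (hchain n))
  have hνS : ∀ m n, N ≤ m → N ≤ n → nuR S (f m) = nuR S (f n) :=
    fun m n hm hn => (hN m hm).trans (hN n hn).symm
  have hmono : Monotone f := monotone_nat_of_le_succ hchain
  have hprincipal : (f '' {n | N ≤ n ∧ ∃ u : Qˣ, f n = u • (T : Set Q)}).Subsingleton := by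
    refine subsingleton_image_of_forall_le_imp_eq ?_
    rintro m ⟨hm, u, hu⟩ n ⟨hn, v, hv⟩ hmn
    have hle := hmono hmn
    have heq := hνS m n hm hn
    rw [hu, hv] at hle heq ⊢
    rw [nuR_smul, nuR_smul, nuR_eq_of_one_mem T.one_mem hTS] at heq
    exact unit_smul_eq_of_subset_of_smul_overring_eq hT hS hle heq
  have hdivisorial : (f '' {n | N ≤ n ∧ nuR S (f n) = f n}).Subsingleton :=
    subsingleton_image_of_forall_le_imp_eq fun m ⟨hm, hfm⟩ n ⟨hn, hfn⟩ _ =>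
      hfm.symm.trans ((hνS m n hm hn).trans hfn)
  have hmax : (f '' {n | N ≤ n ∧ ∃ u : Qˣ, f n = u • M ∧ nuR S M = S}).Subsingleton := by
    refine subsingleton_image_of_forall_le_imp_eq ?_
    rintro m ⟨hm, u, hu, hM⟩ n ⟨hn, v, hv, -⟩ -
    have heq := hνS m n hm hn
    rw [hu, hv, nuR_smul, nuR_smul, hM] at heq
    rw [hu, hv]
    exact unit_smul_max_eq hS heq
  refine hmono.exists_forall_ge_eq_of_finite_image (N := N)
    (((hprincipal.finite.union hdivisorial.finite).union hmax.finite).subset ?_)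
  rintro _ ⟨n, hn, rfl⟩
  rcases rightDivisorial_trichotomy hT hS hTS (hf n).1.1 (hf n).2.2 with h | h | h
  exacts [.inl (.inl ⟨n, ⟨hn, h⟩, rfl⟩), .inl (.inr ⟨n, ⟨hn, h⟩, rfl⟩), .inr ⟨n, ⟨hn, h⟩, rfl⟩]

theorem ACCRightDivisorial.to_overring (hSo : IsOrderIn S) (hT : IsLocalWithMax T M)
    (hS : IsLocalWithMax S M) (hTS : (T : Set Q) ⊆ S) (hST : ¬(S : Set Q) ⊆ T)
    (hacc : ACCRightDivisorial T) : ACCRightDivisorial S := by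
  intro f hf hchain
  have hmono : Monotone f := monotone_nat_of_le_succ hchain
  by_cases htop : ∃ n₀, f n₀ = S
  · obtain ⟨n₀, hn₀⟩ := htop
    exact ⟨n₀, fun n hn => subset_antisymm (hn₀ ▸ (hf n).1.2) (hmono hn)⟩
  push Not at htop
  have hfM : ∀ n, f n ⊆ M := fun n => hS.subset_of_ne (hf n).1 (htop n)
  obtain ⟨N, hN⟩ := hacc (fun n => nuR T (f n))
    (fun n => have ⟨a, haI, ha⟩ := (hf n).2.1
      isRegularRightDivisorialIdeal_nuR ((hfM n).trans hT.subset_coe) haI (hSo.1 a ha))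
    (fun n => nuR_mono T (hchain n))
  have hνT : ∀ m n, N ≤ m → N ≤ n → nuR T (f m) = nuR T (f n) :=
    fun m n hm hn => (hN m hm).trans (hN n hn).symm
  have hprincipal : (f '' {n | N ≤ n ∧ ∃ u : Qˣ, f n = u • (S : Set Q)}).Subsingleton := by
    refine subsingleton_image_of_forall_le_imp_eq ?_
    rintro m ⟨hm, u, hu⟩ n ⟨hn, v, hv⟩ hmn
    have hle := hmono hmn
    have heq := hνT m n hm hn
    rw [hu, hv] at hle heq ⊢
    rw [nuR_smul, nuR_smul] at heq
    exact unit_smul_eq_of_subset_of_smul_nuR_eq hS hT.subset_coe hST hle heq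
  have hdivisorial : (f '' {n | N ≤ n ∧ nuR T (f n) = f n}).Subsingleton :=
    subsingleton_image_of_forall_le_imp_eq fun m ⟨hm, hfm⟩ n ⟨hn, hfn⟩ _ =>
      hfm.symm.trans ((hνT m n hm hn).trans hfn)
  refine hmono.exists_forall_ge_eq_of_finite_image (N := N)
    ((hprincipal.finite.union hdivisorial.finite).subset ?_)
  rintro _ ⟨n, hn, rfl⟩
  rcases rightDivisorial_dichotomy hS hT.subset_coe hTS (hf n).1.1 (hf n).2.2 with h | h
  exacts [.inl ⟨n, ⟨hn, h⟩, rfl⟩, .inr ⟨n, ⟨hn, h⟩, rfl⟩]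

end Mori

end Orders

theorem rightMori_iff_of_samePrimes_general
    {Q : Type*} [Ring Q] [IsArtinianRing Q]
    (T S : Subring Q) (hT : IsLocalOrder T) (hS : IsLocalOrder S)
    (hTS : (T : Set Q) ⊂ (S : Set Q))
    (hprimes : ∀ P : Set Q, IsPrimeIdealSet T P ↔ IsPrimeIdealSet S P) :
    IsRightMori T ↔ IsRightMori S := by
  obtain ⟨hTo, M, hTM⟩ := hT
  obtain ⟨hSo, MS, hSM⟩ := hS
  obtain rfl : M = MS := hTM.eq_of_isPrimeIdealSet_iff hSM hprimes
  exact ⟨fun h => ⟨hSo, h.2.to_overring hSo hTM hSM hTS.1 hTS.2⟩,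
    fun h => ⟨hTo, h.2.of_overring hTo hTM hSM hTS.1⟩⟩

/-- Theorem 3.5. Let `T ⊂ S` be local orders in a simple Artinian
ring `Q` with the same prime ideals. Then `T` is a right Mori order iff `S` is a right
Mori order. -/
theorem rightMori_iff_of_samePrimes
    {Q : Type*} [Ring Q] [IsSimpleRing Q] [IsArtinianRing Q]
    (T S : Subring Q) (hT : IsLocalOrder T) (hS : IsLocalOrder S)
    (hTS : (T : Set Q) ⊂ (S : Set Q))
    (hprimes : ∀ P : Set Q, IsPrimeIdealSet T P ↔ IsPrimeIdealSet S P) :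
    IsRightMori T ↔ IsRightMori S :=
  rightMori_iff_of_samePrimes_general T S hT hS hTS hprimes
end

section
/- Let {S_i}_{i in α} be a family of overrings of an order S in a simple Artinian ring Q with S = ∩_{i in α} S_i, of finite character. Let I be a right fractional ideal of S and J a left fractional ideal of S. Then (S:I)_l = ∩_{i in α} (S_i : IS_i)_l and (S:J)_r = ∩_{i in α} (S_i : S_i J)_r; consequently I^ν = ∩_{i in α} (S_i : S_i (S:I)_l)_r. -/
section Colon

variable {Q : Type*} [Ring Q]

theorem colonR_iInter_left {ι : Sort*} (A : ι → Set Q) (B : Set Q) :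
    colonR (⋂ i, A i) B = ⋂ i, colonR (A i) B := by
  ext q
  simp only [colonR, Set.mem_iInter, Set.mem_ofPred_eq]
  exact ⟨fun h i b hb => h b hb i, fun h b hb i => h i b hb⟩

theorem colonL_iInter_left {ι : Sort*} (A : ι → Set Q) (B : Set Q) :
    colonL (⋂ i, A i) B = ⋂ i, colonL (A i) B := by
  ext q
  simp only [colonL, Set.mem_iInter, Set.mem_ofPred_eq]
  exact ⟨fun h i b hb => h b hb i, fun h b hb i => h i b hb⟩

theorem subset_mulSpan_left (T : Subring Q) (B : Set Q) : B ⊆ mulSpan (T : Set Q) B :=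
  fun b hb => AddSubgroup.subset_closure ⟨1, T.one_mem, b, hb, (one_mul b).symm⟩

theorem subset_mulSpan_right (T : Subring Q) (A : Set Q) : A ⊆ mulSpan A (T : Set Q) :=
  fun a ha => AddSubgroup.subset_closure ⟨a, ha, 1, T.one_mem, (mul_one a).symm⟩

theorem colonR_mulSpan_left (T : Subring Q) (B : Set Q) :
    colonR (T : Set Q) (mulSpan (T : Set Q) B) = colonR (T : Set Q) B := by
  refine Set.Subset.antisymm (fun q hq b hb => hq b (subset_mulSpan_left T B hb)) ?_
  intro q hq
  have hspan : AddSubgroup.closure {x : Q | ∃ t ∈ (T : Set Q), ∃ b ∈ B, x = t * b} ≤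
      T.toAddSubgroup.comap (AddMonoidHom.mulRight q) := by
    rw [AddSubgroup.closure_le]
    rintro _ ⟨t, ht, b, hb, rfl⟩
    show t * b * q ∈ T
    rw [mul_assoc]
    exact T.mul_mem ht (hq b hb)
  exact fun x hx => hspan hx

theorem colonL_mulSpan_right (T : Subring Q) (A : Set Q) :
    colonL (T : Set Q) (mulSpan A (T : Set Q)) = colonL (T : Set Q) A := by
  refine Set.Subset.antisymm (fun q hq a ha => hq a (subset_mulSpan_right T A ha)) ?_
  intro q hq
  have hspan : AddSubgroup.closure {x : Q | ∃ a ∈ A, ∃ t ∈ (T : Set Q), x = a * t} ≤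
      T.toAddSubgroup.comap (AddMonoidHom.mulLeft q) := by
    rw [AddSubgroup.closure_le]
    rintro _ ⟨a, ha, t, ht, rfl⟩
    show q * (a * t) ∈ T
    rw [← mul_assoc]
    exact T.mul_mem (hq a ha) ht
  exact fun x hx => hspan hx

end Colon

theorem colon_intersection_finiteCharacter_general
    {Q : Type*} [Ring Q] {α : Type*}
    (S : Subring Q) (F : α → Subring Q)
    (hint : (S : Set Q) = ⋂ i, (F i : Set Q))
    (I J : Set Q) :
    colonL (S : Set Q) I = (⋂ i, colonL (F i : Set Q) (mulSpan I (F i : Set Q))) ∧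
    colonR (S : Set Q) J = (⋂ i, colonR (F i : Set Q) (mulSpan (F i : Set Q) J)) ∧
    nuR S I = ⋂ i, colonR (F i : Set Q)
      (mulSpan (F i : Set Q) (colonL (S : Set Q) I)) := by
  have hcolonR (B : Set Q) :
      colonR (S : Set Q) B = ⋂ i, colonR (F i : Set Q) (mulSpan (F i : Set Q) B) := by
    simp only [hint, colonR_iInter_left, colonR_mulSpan_left]
  refine ⟨?_, hcolonR J, hcolonR _⟩
  simp only [hint, colonL_iInter_left, colonL_mulSpan_right]

/-- Lemma 3.7. Let `S = ⋂ᵢ Sᵢ` be a finite-character family of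
overrings of an order `S` in a simple Artinian ring `Q`, `I` a right fractional ideal
and `J` a left fractional ideal of `S`. Then `(S:I)_l = ⋂ᵢ (Sᵢ : ISᵢ)_l`,
`(S:J)_r = ⋂ᵢ (Sᵢ : SᵢJ)_r`, and `I^ν = ⋂ᵢ (Sᵢ : Sᵢ(S:I)_l)_r`. -/
theorem colon_intersection_finiteCharacter
    {Q : Type*} [Ring Q] [IsSimpleRing Q] [IsArtinianRing Q] {α : Type*}
    (S : Subring Q) (hS : IsOrderIn S) (F : α → Subring Q)
    (hover : ∀ i, (S : Set Q) ⊆ (F i : Set Q) ∧ IsOrderIn (F i))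
    (hint : (S : Set Q) = ⋂ i, (F i : Set Q))
    (hfc : FiniteCharacter S F)
    (I J : Set Q) (hI : IsRightSIdeal S I) (hJ : IsLeftSIdeal S J) :
    colonL (S : Set Q) I = (⋂ i, colonL (F i : Set Q) (mulSpan I (F i : Set Q))) ∧
    colonR (S : Set Q) J = (⋂ i, colonR (F i : Set Q) (mulSpan (F i : Set Q) J)) ∧
    nuR S I = ⋂ i, colonR (F i : Set Q)
      (mulSpan (F i : Set Q) (colonL (S : Set Q) I)) :=
  colon_intersection_finiteCharacter_general S F hint I J
end

section
/- Let {S_i}_{i in α} be a family of overrings of an order S in a simple Artinian ring Q with S = ∩_{i in α} S_i, of finite character, and let I ⊂ J be two right ν-ideals of S. Then there exists i in α such that (S_i : S_i (S:I)_l)_r is properly contained in (S_i : S_i (S:J)_l)_r. -/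
/-! Since `S = ⋂ᵢ Sᵢ`, the `ν`-closure `I^ν = (S : (S:I)_l)_r` is the intersection of the
`(Sᵢ : Sᵢ(S:I)_l)_r`. If all these colons agreed for `I` and `J`, then `I = I^ν = J^ν = J`. -/

section Colon

variable {Q : Type*} [Ring Q]

lemma colonR_antitone (A : Set Q) {B B' : Set Q} (h : B ⊆ B') :
    colonR A B' ⊆ colonR A B :=
  fun _ hq b hb => hq b (h hb)

lemma colonL_antitone (A : Set Q) {B B' : Set Q} (h : B ⊆ B') :
    colonL A B' ⊆ colonL A B :=
  fun _ hq b hb => hq b (h hb)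

lemma mulSpan_mono (A : Set Q) {B B' : Set Q} (h : B ⊆ B') :
    mulSpan A B ⊆ mulSpan A B' := by
  apply AddSubgroup.closure_mono
  rintro _ ⟨a, ha, b, hb, rfl⟩
  exact ⟨a, ha, b, h hb, rfl⟩

lemma colonR_iInter {ι : Type*} (A : ι → Set Q) (B : Set Q) :
    colonR (⋂ i, A i) B = ⋂ i, colonR (A i) B := by
  ext q
  simp only [colonR, Set.mem_ofPred_eq, Set.mem_iInter]
  exact ⟨fun h i b hb => h b hb i, fun h b hb i => h i b hb⟩

lemma colonR_mulSpan (R : Subring Q) (X : Set Q) :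
    colonR (R : Set Q) (mulSpan (R : Set Q) X) = colonR (R : Set Q) X := by
  refine subset_antisymm (colonR_antitone _ fun x hx => ?_) fun q hq => ?_
  · exact AddSubgroup.subset_closure ⟨1, R.one_mem, x, hx, (one_mul x).symm⟩
  · have hspan : mulSpan (R : Set Q) X ⊆ R.toAddSubgroup.comap (AddMonoidHom.mulRight q) := by
      rw [mulSpan, SetLike.coe_subset_coe, AddSubgroup.closure_le]
      rintro _ ⟨a, ha, b, hb, rfl⟩
      show a * b * q ∈ R
      rw [mul_assoc]
      exact R.mul_mem ha (hq b hb)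
    exact fun m hm => hspan hm

lemma nuR_eq_iInter_colonR_mulSpan {α : Type*} (S : Subring Q) (F : α → Subring Q)
    (hint : (S : Set Q) = ⋂ i, (F i : Set Q)) (I : Set Q) :
    nuR S I = ⋂ i, colonR (F i : Set Q) (mulSpan (F i : Set Q) (colonL (S : Set Q) I)) := by
  simp only [colonR_mulSpan]
  rw [nuR, ← colonR_iInter, ← hint]

end Colon

theorem exists_index_strict_colon_general
    {Q : Type*} [Ring Q] {α : Type*}
    (S : Subring Q) (F : α → Subring Q)
    (hint : (S : Set Q) = ⋂ i, (F i : Set Q))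
    (I J : Set Q) (hInu : nuR S I = I)
    (hJnu : nuR S J = J) (hIJ : I ⊂ J) :
    ∃ i : α, colonR (F i : Set Q) (mulSpan (F i : Set Q) (colonL (S : Set Q) I)) ⊂
      colonR (F i : Set Q) (mulSpan (F i : Set Q) (colonL (S : Set Q) J)) := by
  by_contra! hnot
  have hcolon_eq : ∀ i, colonR (F i : Set Q) (mulSpan (F i : Set Q) (colonL (S : Set Q) I)) =
      colonR (F i : Set Q) (mulSpan (F i : Set Q) (colonL (S : Set Q) J)) := fun i =>
    (colonR_antitone _ (mulSpan_mono _ (colonL_antitone _ hIJ.subset))).eq_of_not_ssubset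
      (hnot i)
  have hnu_eq : nuR S I = nuR S J := by
    rw [nuR_eq_iInter_colonR_mulSpan S F hint, nuR_eq_iInter_colonR_mulSpan S F hint]
    exact Set.iInter_congr hcolon_eq
  exact hIJ.ne (hInu.symm.trans (hnu_eq.trans hJnu))

/-- Lemma 3.8. Let `S = ⋂ᵢ Sᵢ` be a finite-character family of
overrings of an order `S` in a simple Artinian ring `Q` and `I ⊂ J` two right
`ν`-ideals of `S`. Then there is an index `i` with
`(Sᵢ : Sᵢ(S:I)_l)_r ⊂ (Sᵢ : Sᵢ(S:J)_l)_r`. -/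
theorem exists_index_strict_colon
    {Q : Type*} [Ring Q] [IsSimpleRing Q] [IsArtinianRing Q] {α : Type*}
    (S : Subring Q) (hS : IsOrderIn S) (F : α → Subring Q)
    (hover : ∀ i, (S : Set Q) ⊆ (F i : Set Q) ∧ IsOrderIn (F i))
    (hint : (S : Set Q) = ⋂ i, (F i : Set Q))
    (hfc : FiniteCharacter S F)
    (I J : Set Q) (hI : IsRightSIdeal S I) (hInu : nuR S I = I)
    (hJ : IsRightSIdeal S J) (hJnu : nuR S J = J) (hIJ : I ⊂ J) :
    ∃ i : α, colonR (F i : Set Q) (mulSpan (F i : Set Q) (colonL (S : Set Q) I)) ⊂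
      colonR (F i : Set Q) (mulSpan (F i : Set Q) (colonL (S : Set Q) J)) :=
  exists_index_strict_colon_general S F hint I J hInu hJnu hIJ
end
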